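/- arXiv:2604.23800 — 5 statements merged into one kernel-verified Lean document; each statement's English description precedes it below -/
import Mathlib

section
/- Let p(z) = ∏_{k=1}^n p_k(z_k | pa_k(z)) be a positive density on ℝ^n that factorizes according to a DAG G. Suppose node i is a sink of G and its conditional density is Gaussian with additive noise of constant variance: log p_i(z_i | pa_i(z)) = -(1/2)((z_i - f_i(pa_i(z)))/σ_i)² - (1/2)log(2π σ_i²), where f_i is a smooth function of the parents of i only. Then for every j, the third-order mixed partial derivative ∂³ log p(z) / ∂z_i² ∂z_j equals zero. -/
/-!
Since `i` is a sink, `z i` enters `log p = ∑ₖ Lₖ` only through `Lᵢ`, and `f` does not depend on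
`z i` (acyclicity rules out `i → i`). Hence, up to terms free of `z i`, `log p` is the quadratic
`c (z i - f z)² + d` with `c = -1/(2σ²)`, so `∂ᵢ² log p = 2c` is constant.
-/

/-- Partial derivative of a scalar function on `ℝ^n` in the `i`-th coordinate direction. -/
noncomputable def pd {n : ℕ} (i : Fin n) (f : (Fin n → ℝ) → ℝ) : (Fin n → ℝ) → ℝ :=
  fun z => fderiv ℝ f z (Pi.single i 1)

open Finset

variable {n : ℕ} {i : Fin n}

def IndepOfCoord (i : Fin n) (F : (Fin n → ℝ) → ℝ) : Prop :=
  ∀ z z' : Fin n → ℝ, (∀ j, j ≠ i → z j = z' j) → F z = F z'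

lemma pd_eq_deriv_line {F : (Fin n → ℝ) → ℝ} {z : Fin n → ℝ} (hF : DifferentiableAt ℝ F z) :
    pd i F z = deriv (fun t : ℝ => F (z + t • Pi.single i 1)) 0 := by
  have hline : HasDerivAt (fun t : ℝ => z + t • (Pi.single i 1 : Fin n → ℝ)) (Pi.single i 1) 0 := by
    simpa using ((hasDerivAt_id (0 : ℝ)).smul_const (Pi.single i 1 : Fin n → ℝ)).const_add z
  have hF' : HasFDerivAt F (fderiv ℝ F z) (z + (0 : ℝ) • (Pi.single i 1 : Fin n → ℝ)) := by
    simpa using hF.hasFDerivAt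
  exact (hF'.comp_hasDerivAt 0 hline).deriv.symm

lemma add_smul_single_eq_of_ne {z : Fin n → ℝ} {j : Fin n} (hj : j ≠ i) (t : ℝ) :
    (z + t • (Pi.single i 1 : Fin n → ℝ)) j = z j := by
  simp [Pi.single_eq_of_ne hj]

lemma IndepOfCoord.pd_eq_zero {F : (Fin n → ℝ) → ℝ} (hF : IndepOfCoord i F) (z : Fin n → ℝ) :
    pd i F z = 0 := by
  by_cases hdiff : DifferentiableAt ℝ F z
  · have hconst : (fun t : ℝ => F (z + t • Pi.single i 1)) = fun _ => F z :=
      funext fun t => hF _ _ fun j hj => add_smul_single_eq_of_ne hj t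
    rw [pd_eq_deriv_line hdiff, hconst, deriv_const]
  · simp [pd, fderiv_zero_of_not_differentiableAt hdiff]

lemma pd_sum {ι : Type*} (s : Finset ι) {F : ι → (Fin n → ℝ) → ℝ} {z : Fin n → ℝ}
    (hF : ∀ k ∈ s, DifferentiableAt ℝ (F k) z) :
    pd i (fun w => ∑ k ∈ s, F k w) z = ∑ k ∈ s, pd i (F k) z := by
  simp only [pd, fderiv_fun_sum hF, _root_.sum_apply]

lemma pd_comp_sub_eq {g : (Fin n → ℝ) → ℝ} {z : Fin n → ℝ} (hg : DifferentiableAt ℝ g z)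
    (hgi : IndepOfCoord i g)
    {φ : ℝ → ℝ} {φ' : ℝ} (hφ : HasDerivAt φ φ' (z i - g z)) :
    pd i (fun w => φ (w i - g w)) z = φ' := by
  have hdiff : DifferentiableAt ℝ (fun w => φ (w i - g w)) z :=
    hφ.differentiableAt.comp z ((differentiableAt_apply i z).sub hg)
  have hline : (fun t : ℝ => φ ((z + t • (Pi.single i 1 : Fin n → ℝ)) i
      - g (z + t • Pi.single i 1))) = fun t => φ (t + (z i - g z)) := by
    funext t
    rw [hgi _ z fun j hj => add_smul_single_eq_of_ne hj t]
    simp only [Pi.add_apply, Pi.smul_apply, Pi.single_eq_same, smul_eq_mul, mul_one]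
    congr 1
    ring
  rw [pd_eq_deriv_line hdiff, hline]
  exact (HasDerivAt.comp_add_const 0 _ (by simpa using hφ)).deriv

theorem stmt0_general {n : ℕ} (E : Fin n → Fin n → Prop)
    (hacyc : ∀ a, ¬ Relation.TransGen E a a)
    (p : (Fin n → ℝ) → ℝ)
    (L : Fin n → (Fin n → ℝ) → ℝ)
    (hfac : ∀ z, Real.log (p z) = ∑ k, L k z)
    (hsmooth : ∀ k, ContDiff ℝ 3 (L k))
    (hdep : ∀ k (z z' : Fin n → ℝ),
      z k = z' k → (∀ j, E j k → z j = z' j) → L k z = L k z')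
    (i : Fin n) (hsink : ∀ j, ¬ E i j)
    (f : (Fin n → ℝ) → ℝ) (hf : ContDiff ℝ 3 f)
    (hfdep : ∀ z z' : Fin n → ℝ, (∀ j, E j i → z j = z' j) → f z = f z')
    (σ : ℝ)
    (hGauss : ∀ z, L i z =
      -(1/2) * ((z i - f z) / σ)^2 - (1/2) * Real.log (2 * Real.pi * σ^2)) :
    ∀ (j : Fin n) (z : Fin n → ℝ),
      pd j (pd i (pd i (fun w => Real.log (p w)))) z = 0 := by
  intro j z
  have hfi : IndepOfCoord i f := fun w w' h =>
    hfdep w w' fun k hk => h k fun hki => hacyc i (.single (hki ▸ hk))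
  have hLi : ∀ k, k ≠ i → ∀ w, pd i (L k) w = 0 := fun k hk =>
    IndepOfCoord.pd_eq_zero fun w w' h =>
      hdep k w w' (h k hk) fun m hm => h m fun hmi => hsink k (hmi ▸ hm)
  have hdiff : ∀ k, Differentiable ℝ (L k) := fun k => (hsmooth k).differentiable (by norm_num)
  have hfd : Differentiable ℝ f := hf.differentiable (by norm_num)
  set c : ℝ := -(1/2) / σ^2
  set d : ℝ := -(1/2) * Real.log (2 * Real.pi * σ^2)
  have hL : L i = fun w => c * (w i - f w)^2 + d := funext fun w => by rw [hGauss]; ring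
  have hpd1 : pd i (fun w => Real.log (p w)) = fun w => 2 * c * (w i - f w) := by
    funext w
    rw [show (fun w => Real.log (p w)) = fun w => ∑ k, L k w from funext hfac,
      pd_sum _ fun k _ => hdiff k w, sum_eq_single i (fun k _ hk => hLi k hk w) (by simp), hL]
    exact pd_comp_sub_eq (φ := fun x => c * x^2 + d) (hfd w) hfi
      ((((hasDerivAt_pow 2 _).const_mul c).add_const d).congr_deriv (by norm_num; ring))
  have hpd2 : pd i (pd i (fun w => Real.log (p w))) = fun _ => 2 * c := by
    funext w
    rw [hpd1]
    exact pd_comp_sub_eq (φ := fun x => 2 * c * x) (hfd w) hfi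
      (by simpa using (hasDerivAt_id _).const_mul (2 * c))
  rw [hpd2]
  exact IndepOfCoord.pd_eq_zero (fun _ _ _ => rfl) z

/-- If node `i` is a sink of a DAG and its conditional density is Gaussian with additive
noise of constant variance, then `∂³ log p / ∂z_i² ∂z_j = 0` for every `j`. -/
theorem stmt0 {n : ℕ} (E : Fin n → Fin n → Prop)
    (hacyc : ∀ a, ¬ Relation.TransGen E a a)
    (p : (Fin n → ℝ) → ℝ) (hp : ∀ z, 0 < p z)
    (L : Fin n → (Fin n → ℝ) → ℝ)
    (hfac : ∀ z, Real.log (p z) = ∑ k, L k z)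
    (hsmooth : ∀ k, ContDiff ℝ 3 (L k))
    (hdep : ∀ k (z z' : Fin n → ℝ),
      z k = z' k → (∀ j, E j k → z j = z' j) → L k z = L k z')
    (i : Fin n) (hsink : ∀ j, ¬ E i j)
    (f : (Fin n → ℝ) → ℝ) (hf : ContDiff ℝ 3 f)
    (hfdep : ∀ z z' : Fin n → ℝ, (∀ j, E j i → z j = z' j) → f z = f z')
    (σ : ℝ) (hσ : 0 < σ)
    (hGauss : ∀ z, L i z =
      -(1/2) * ((z i - f z) / σ)^2 - (1/2) * Real.log (2 * Real.pi * σ^2)) :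
    ∀ (j : Fin n) (z : Fin n → ℝ),
      pd j (pd i (pd i (fun w => Real.log (p w)))) z = 0 :=
  stmt0_general E hacyc p L hfac hsmooth hdep i hsink f hf hfdep σ hGauss
end

section
/- Let G be a DAG on nodes {1,…,n}, and let M be the moral graph of G. For a node i, define the surrounding parents sur(i; G) as the set of parents j of i such that j is also a parent of every child of i. Define the intimate neighbors Ψ(i; M) as the set of nodes j ≠ i adjacent to i in M that are adjacent to all other neighbors of i in M. Then sur(i; G) ⊆ Ψ(i; M). -/
/-- Surrounding parents are intimate neighbors in the moral graph: if `j` is a parent of `i` that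
is also a parent of every child of `i`, then `j` is adjacent to `i` in the moral graph `M` and
adjacent to all other neighbors of `i` in `M`. -/
theorem stmt5 {n : ℕ} (E : Fin n → Fin n → Prop)
    (hacyc : ∀ a, ¬ Relation.TransGen E a a)
    (M : Fin n → Fin n → Prop)
    (hM : ∀ a b, M a b ↔ a ≠ b ∧ (E a b ∨ E b a ∨ ∃ c, E a c ∧ E b c))
    (i j : Fin n)
    (hpar : E j i) (hall : ∀ c, E i c → E j c) :
    j ≠ i ∧ M i j ∧ ∀ k, k ≠ j → M i k → M j k := by
  have hji : j ≠ i := fun h => hacyc i (.single (h ▸ hpar))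
  refine ⟨hji, (hM i j).2 ⟨hji.symm, .inr (.inl hpar)⟩, fun k hkj hik => ?_⟩
  obtain ⟨-, hedge⟩ := (hM i k).1 hik
  refine (hM j k).2 ⟨hkj.symm, ?_⟩
  -- children of `i` are children of `j`, and a parent of `i` shares the child `i` with `j`
  rcases hedge with hchild | hparent | ⟨c, hic, hkc⟩
  · exact .inl (hall k hchild)
  · exact .inr (.inr ⟨i, hpar, hparent⟩)
  · exact .inr (.inr ⟨c, hall c hic, hkc⟩)
end

section
/- Let G be a DAG on {1,…,n} and let α be a topological (causal) order of G, i.e., α is a bijection on {1,…,n} such that whenever α(a) → α(b) is an edge of G one has a < b. For k ∈ {1,…,n}, let G_k denote the induced subgraph of G on the node set {α(1),…,α(k)}, and let M_k be its moral graph. For i ∈ {1,…,n−1}, define Ψ(α(i); M_k) as the set of nodes adjacent to α(i) in M_k that are also adjacent to every other neighbor of α(i) in M_k, and define sur(α(i); G) as the set of parents of α(i) in G that are parents of every child of α(i) in G. Then ⋂_{k=i}^{n} Ψ(α(i); M_k) ⊆ sur(α(i); G). -/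
/-!
In a topological order the last node `α k` of a prefix has no children inside the prefix, so
each of its neighbours in the moral graph `M_k` is one of its parents. With `k = i` this makes
`j` a parent of `α i`. A child `α m` of `α i` is a neighbour of `α i` in `M_m`, hence so is `j`
by intimacy, and again `j` must be a parent of `α m`.
-/

/-- The prefix `{α(0),…,α(k)}` of a topological order `α`. -/
def prefixSet {n : ℕ} (α : Fin n → Fin n) (k : Fin n) : Set (Fin n) :=
  {v | ∃ a, a ≤ k ∧ α a = v}

/-- Moral-graph adjacency within the induced subgraph on the prefix `{α(0),…,α(k)}`:
two distinct nodes of the prefix are adjacent iff they are adjacent in the DAG or share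
a common child within the prefix. -/
def MadjSub {n : ℕ} (E : Fin n → Fin n → Prop) (S : Set (Fin n)) (a b : Fin n) : Prop :=
  a ∈ S ∧ b ∈ S ∧ a ≠ b ∧ (E a b ∨ E b a ∨ ∃ c ∈ S, E a c ∧ E b c)

section TopologicalOrder

variable {n : ℕ} {E : Fin n → Fin n → Prop} {α : Fin n → Fin n}

theorem MadjSub.symm {S : Set (Fin n)} {a b : Fin n} (h : MadjSub E S a b) :
    MadjSub E S b a := by
  obtain ⟨ha, hb, hab, hedge | hedge | ⟨c, hc, hac, hbc⟩⟩ := h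
  exacts [⟨hb, ha, hab.symm, Or.inr (Or.inl hedge)⟩, ⟨hb, ha, hab.symm, Or.inl hedge⟩,
    ⟨hb, ha, hab.symm, Or.inr (Or.inr ⟨c, hc, hbc, hac⟩)⟩]

theorem MadjSub.edge_to_last (htopo : ∀ a b, E (α a) (α b) → a < b) {k v : Fin n}
    (h : MadjSub E (prefixSet α k) v (α k)) : E v (α k) := by
  obtain ⟨⟨b, hbk, rfl⟩, -, -, hedge | hedge | ⟨-, ⟨c, hck, rfl⟩, -, hedge⟩⟩ := h
  · exact hedge
  · exact absurd (htopo k b hedge) hbk.not_gt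
  · exact absurd (htopo k c hedge) hck.not_gt

theorem madjSub_prefixSet_of_edge (htopo : ∀ a b, E (α a) (α b) → a < b) {a b k : Fin n}
    (hab : E (α a) (α b)) (hbk : b ≤ k) : MadjSub E (prefixSet α k) (α a) (α b) := by
  have hlt : a < b := htopo a b hab
  refine ⟨⟨a, hlt.le.trans hbk, rfl⟩, ⟨b, hbk, rfl⟩, fun hEq => ?_, Or.inl hab⟩
  rw [hEq] at hab
  exact (htopo b b hab).false

end TopologicalOrder

/-- If `j` is an intimate neighbor of `α(i)` in the moral graph of every prefix subgraph
`G_k` with `i ≤ k`, then `j` is a surrounding parent of `α(i)` in `G`. -/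
theorem stmt6 {n : ℕ} (E : Fin n → Fin n → Prop) (α : Fin n → Fin n)
    (hα : Function.Bijective α)
    (htopo : ∀ a b, E (α a) (α b) → a < b)
    (i : Fin n) (j : Fin n)
    (hΨ : ∀ k : Fin n, i ≤ k →
      MadjSub E (prefixSet α k) (α i) j ∧
        ∀ l, l ≠ j → MadjSub E (prefixSet α k) (α i) l →
          MadjSub E (prefixSet α k) j l) :
    E j (α i) ∧ ∀ c, E (α i) c → E j c := by
  have hparent : E j (α i) := (hΨ i le_rfl).1.symm.edge_to_last htopo
  refine ⟨hparent, fun c hc => ?_⟩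
  obtain ⟨m, rfl⟩ := hα.2 c
  have him : i < m := htopo i m hc
  have hmj : α m ≠ j := by
    rintro rfl
    exact (htopo m i hparent).asymm him
  have hchild : MadjSub E (prefixSet α m) (α i) (α m) := madjSub_prefixSet_of_edge htopo hc le_rfl
  exact ((hΨ m him.le).2 (α m) hmj hchild).edge_to_last htopo
end

section
/- Let p be a positive, twice continuously differentiable density on ℝ^n. Then for distinct indices i and j, the cross second-order partial derivative ∂² log p(z)/∂z_i ∂z_j is identically zero if and only if p factorizes as p(z) = g(z_{-j}) h(z_{-i}) for some positive functions g, h (equivalently, Z_i and Z_j are conditionally independent given all other coordinates). -/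
/-!
With `f = log p`, the identity `∂ⱼ∂ᵢ f = 0` says that `∂ᵢ f` is constant along lines in direction
`eⱼ`; integrating along `eᵢ`, this is the vanishing of every mixed difference
`f (x + s eᵢ + t eⱼ) - f (x + s eᵢ) - f (x + t eⱼ) + f x`. Vanishing mixed differences are the
same as splittings `f = G + H` with `G` free of `zⱼ` and `H` free of `zᵢ` (take the mixed
difference at the corner `x = z - zᵢ eᵢ - zⱼ eⱼ`), and exponentiating gives `p = e^G e^H`.
-/

section Directional

variable {E G : Type*} [NormedAddCommGroup E] [NormedSpace ℝ E]
  [NormedAddCommGroup G] [NormedSpace ℝ G]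

theorem hasDerivAt_comp_add_smul {F : E → G} (hF : Differentiable ℝ F) (x v : E) (t : ℝ) :
    HasDerivAt (fun s : ℝ => F (x + s • v)) (fderiv ℝ F (x + t • v) v) t := by
  have hline : HasDerivAt (fun s : ℝ => x + s • v) v t := by
    simpa using ((hasDerivAt_id t).smul_const v).const_add x
  exact (hF _).hasFDerivAt.comp_hasDerivAt t hline

theorem forall_fderiv_apply_eq_zero_iff {F : E → G} (hF : Differentiable ℝ F) (v : E) :
    (∀ x, fderiv ℝ F x v = 0) ↔ ∀ x (t : ℝ), F (x + t • v) = F x := by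
  constructor
  · intro h x t
    have hderiv (s : ℝ) : HasDerivAt (fun s : ℝ => F (x + s • v)) 0 s := by
      simpa only [h] using hasDerivAt_comp_add_smul hF x v s
    simpa using is_const_of_deriv_eq_zero (fun s => (hderiv s).differentiableAt)
      (fun s => (hderiv s).deriv) t 0
  · intro h x
    have hline := hasDerivAt_comp_add_smul hF x v 0
    simp only [h, zero_smul, add_zero] at hline
    exact hline.unique (hasDerivAt_const 0 (F x))

theorem forall_fderiv_fderiv_apply_eq_zero_iff {f : E → G} (hf : Differentiable ℝ f) {u : E}
    (hfu : Differentiable ℝ fun x => fderiv ℝ f x u) (v : E) :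
    (∀ x, fderiv ℝ (fun y => fderiv ℝ f y u) x v = 0) ↔
      ∀ x (s t : ℝ), f (x + s • u + t • v) - f (x + s • u) = f (x + t • v) - f x := by
  rw [forall_fderiv_apply_eq_zero_iff hfu, forall_comm]
  have hshift (t : ℝ) : (∀ y, fderiv ℝ f (y + t • v) u = fderiv ℝ f y u) ↔
      ∀ x (s : ℝ), f (x + s • u + t • v) - f (x + s • u) = f (x + t • v) - f x := by
    have hft : Differentiable ℝ fun y => f (y + t • v) := fun y =>
      (differentiableAt_comp_add_right _).2 (hf _)
    have hincr (y : E) : fderiv ℝ (fun y => f (y + t • v) - f y) y u =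
        fderiv ℝ f (y + t • v) u - fderiv ℝ f y u := by
      rw [fderiv_fun_sub (hft y) (hf y), fderiv_comp_add_right]
      rfl
    simp only [← sub_eq_zero (a := fderiv ℝ f (_ + t • v) u), ← hincr]
    exact forall_fderiv_apply_eq_zero_iff (hft.sub hf) u
  simp only [hshift]
  exact ⟨fun h x s t => h t x s, fun h t x s => h x s t⟩

end Directional

section Factorization

variable {ι α G : Type*} [DecidableEq ι] [AddCommGroup α] [AddCommGroup G]

theorem sub_single_self_eq_of_forall_ne {z z' : ι → α} {j : ι}
    (h : ∀ k, k ≠ j → z k = z' k) : z - Pi.single j (z j) = z' - Pi.single j (z' j) := by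
  funext k
  by_cases hk : k = j
  · subst hk; simp
  · simp [hk, h k hk]

theorem add_single_apply_of_ne (x : ι → α) {j k : ι} (a : α) (hk : k ≠ j) :
    (x + Pi.single j a : ι → α) k = x k := by
  simp [hk]

theorem forall_sub_eq_sub_iff_exists_add {f : (ι → α) → G} {i j : ι} (hij : i ≠ j) :
    (∀ x s t, f (x + Pi.single i s + Pi.single j t) - f (x + Pi.single i s) =
        f (x + Pi.single j t) - f x) ↔
      ∃ g h : (ι → α) → G,
        (∀ z z' : ι → α, (∀ k, k ≠ j → z k = z' k) → g z = g z') ∧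
        (∀ z z' : ι → α, (∀ k, k ≠ i → z k = z' k) → h z = h z') ∧
        ∀ z, f z = g z + h z := by
  constructor
  · intro hf
    refine ⟨fun z => f (z - Pi.single j (z j)),
      fun z => f (z - Pi.single i (z i)) - f (z - Pi.single i (z i) - Pi.single j (z j)),
      fun z z' hzz' => by simp only [sub_single_self_eq_of_forall_ne hzz'],
      fun z z' hzz' => by simp only [sub_single_self_eq_of_forall_ne hzz', hzz' j hij.symm],
      fun z => ?_⟩
    convert eq_add_of_sub_eq' (hf (z - Pi.single i (z i) - Pi.single j (z j)) (z i) (z j))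
      using 4 <;> abel
  · rintro ⟨g, h, hg, hh, hfgh⟩ x s t
    have hg₁ := hg (x + Pi.single i s + Pi.single j t) (x + Pi.single i s)
      fun k hk => add_single_apply_of_ne _ _ hk
    have hg₂ := hg (x + Pi.single j t) x fun k hk => add_single_apply_of_ne _ _ hk
    have hh₁ := hh (x + Pi.single i s + Pi.single j t) (x + Pi.single j t)
      fun k hk => by rw [add_right_comm]; exact add_single_apply_of_ne _ _ hk
    have hh₂ := hh (x + Pi.single i s) x fun k hk => add_single_apply_of_ne _ _ hk
    simp only [hfgh, hg₁, hg₂, hh₁, hh₂]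
    abel

end Factorization

theorem exists_log_eq_add_iff_exists_eq_mul {X : Type*} {p : X → ℝ} (hp : ∀ z, 0 < p z)
    {P Q : (X → ℝ) → Prop} (hP : ∀ (φ : ℝ → ℝ) g, P g → P (φ ∘ g))
    (hQ : ∀ (φ : ℝ → ℝ) h, Q h → Q (φ ∘ h)) :
    (∃ g h : X → ℝ, P g ∧ Q h ∧ ∀ z, Real.log (p z) = g z + h z) ↔
      ∃ g h : X → ℝ, (∀ z, 0 < g z) ∧ (∀ z, 0 < h z) ∧ P g ∧ Q h ∧ ∀ z, p z = g z * h z := by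
  constructor
  · rintro ⟨g, h, hg, hh, hlog⟩
    refine ⟨Real.exp ∘ g, Real.exp ∘ h, fun z => Real.exp_pos _, fun z => Real.exp_pos _,
      hP _ _ hg, hQ _ _ hh, fun z => ?_⟩
    rw [Function.comp_apply, Function.comp_apply, ← Real.exp_add, ← hlog, Real.exp_log (hp z)]
  · rintro ⟨g, h, hg, hh, hPg, hQh, hfac⟩
    refine ⟨Real.log ∘ g, Real.log ∘ h, hP _ _ hPg, hQ _ _ hQh, fun z => ?_⟩
    rw [hfac, Real.log_mul (hg z).ne' (hh z).ne', Function.comp_apply, Function.comp_apply]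

/-- Factorization criterion: for a positive C² density `p`, the cross second derivative
`∂² log p / ∂z_i ∂z_j` vanishes identically iff `p(z) = g(z₋ⱼ) h(z₋ᵢ)` for positive
`g` (not depending on coordinate `j`) and `h` (not depending on coordinate `i`). -/
theorem stmt9 {n : ℕ} (p : (Fin n → ℝ) → ℝ)
    (hp : ∀ z, 0 < p z) (hpC : ContDiff ℝ 2 p)
    (i j : Fin n) (hij : i ≠ j) :
    (∀ z, pd j (pd i (fun w => Real.log (p w))) z = 0) ↔
      ∃ g h : (Fin n → ℝ) → ℝ,
        (∀ z, 0 < g z) ∧ (∀ z, 0 < h z) ∧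
        (∀ z z' : Fin n → ℝ, (∀ k, k ≠ j → z k = z' k) → g z = g z') ∧
        (∀ z z' : Fin n → ℝ, (∀ k, k ≠ i → z k = z' k) → h z = h z') ∧
        (∀ z, p z = g z * h z) := by
  have hlog : ContDiff ℝ 2 fun w => Real.log (p w) := hpC.log fun z => (hp z).ne'
  have hlog_i : Differentiable ℝ (pd i fun w => Real.log (p w)) :=
    ((hlog.fderiv_right (m := 1) (by norm_num)).clm_apply contDiff_const).differentiable
      one_ne_zero
  have hsingle (k : Fin n) (s : ℝ) : s • (Pi.single k 1 : Fin n → ℝ) = Pi.single k s := by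
    rw [← Pi.single_smul', smul_eq_mul, mul_one]
  calc (∀ z, pd j (pd i fun w => Real.log (p w)) z = 0)
      ↔ ∀ x (s t : ℝ), Real.log (p (x + Pi.single i s + Pi.single j t)) -
          Real.log (p (x + Pi.single i s)) =
          Real.log (p (x + Pi.single j t)) - Real.log (p x) := by
        have hmixed := forall_fderiv_fderiv_apply_eq_zero_iff
          (hlog.differentiable two_ne_zero) hlog_i (Pi.single j 1)
        simp only [hsingle] at hmixed
        exact hmixed
    _ ↔ _ := forall_sub_eq_sub_iff_exists_add (f := fun w => Real.log (p w)) hij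
    _ ↔ _ := exists_log_eq_add_iff_exists_eq_mul hp
        (fun φ _ hg z z' hzz' => congrArg φ (hg z z' hzz'))
        (fun φ _ hh z z' hzz' => congrArg φ (hh z z' hzz'))
end

section
/- Let v : ℝ^n → ℝ^n be a C¹ map whose Jacobian J(x) is invertible everywhere, I ⊆ {1,…,n}, and suppose J(x)_{ij} = 0 for all i ∈ I, j ∉ I, and all x. If additionally v is a diffeomorphism of ℝ^n onto ℝ^n, then the map from the I-coordinates to the I-coordinates, i.e., x_I ↦ (v(x))_I, is well defined (depends only on x_I) and is itself a diffeomorphism of ℝ^{|I|} onto its image. -/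
/-!
Write `EqOn x y I` for agreement on the `I`-coordinates. The block condition says that every
`Dv(x)` maps vectors vanishing on `I` to vectors vanishing on `I`, i.e. preserves agreement on
`I`; integrating along segments, so does `v`. Since `Dw(v x)` is the inverse of the injective
endomorphism `Dv(x)`, which therefore maps the finite-dimensional space of vectors vanishing on
`I` onto itself, `Dw` and then `w` preserve agreement on `I` as well. A left inverse that
preserves agreement on `I` induces a left inverse on the `I`-coordinates; applied to `w ∘ v = id`
this gives injectivity, and applied to `Dw(v x) ∘ Dv(x) = id` and `Dv(x) ∘ Dw(v x) = id` it
inverts the differential of the induced map.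
-/

/-- The map induced on the `I`-coordinates by `v`, completing the remaining coordinates by `0`. -/
noncomputable def restrictMap {n : ℕ} (I : Set (Fin n)) [DecidablePred (· ∈ I)]
    (v : (Fin n → ℝ) → (Fin n → ℝ)) : (↥I → ℝ) → (↥I → ℝ) :=
  fun z i => v (fun k => if h : k ∈ I then z ⟨k, h⟩ else 0) i.1

open Function Set

def PreservesEqOn {ι R : Type*} (I : Set ι) (f : (ι → R) → (ι → R)) : Prop :=
  ∀ ⦃x y⦄, EqOn x y I → EqOn (f x) (f y) I

section Linear

variable {𝕜 ι : Type*} {I : Set ι}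

theorem LinearMap.preservesEqOn_iff [Ring 𝕜] (T : (ι → 𝕜) →ₗ[𝕜] (ι → 𝕜)) :
    PreservesEqOn I T ↔ ∀ u, EqOn u 0 I → EqOn (T u) 0 I := by
  refine ⟨fun hT u hu => by simpa using hT hu, fun hT x y hxy i hi => ?_⟩
  have hxy' : EqOn (x - y) 0 I := fun j hj => sub_eq_zero.2 (hxy hj)
  simpa [sub_eq_zero] using hT (x - y) hxy' hi

theorem LinearMap.preservesEqOn_of_single [CommRing 𝕜] [Fintype ι] [DecidableEq ι]
    (T : (ι → 𝕜) →ₗ[𝕜] (ι → 𝕜)) (hT : ∀ i ∈ I, ∀ j ∉ I, T (Pi.single j 1) i = 0) :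
    PreservesEqOn I T := by
  refine T.preservesEqOn_iff.2 fun u hu i hi => ?_
  rw [← Matrix.toLin'_toMatrix' T, Matrix.toLin'_apply, Pi.zero_apply, Matrix.mulVec,
    dotProduct]
  refine Finset.sum_eq_zero fun j _ => ?_
  by_cases hj : j ∈ I
  · simp [hu hj]
  · simp [hT i hi j hj]

theorem LinearMap.preservesEqOn_of_leftInverse [Field 𝕜] [Finite ι] {T S : (ι → 𝕜) →ₗ[𝕜] (ι → 𝕜)}
    (hST : LeftInverse S T) (hT : PreservesEqOn I T) : PreservesEqOn I S := by
  let V : Submodule 𝕜 (ι → 𝕜) := Submodule.pi I fun _ => ⊥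
  have mem_V {u : ι → 𝕜} : u ∈ V ↔ EqOn u 0 I := by simp [V, Submodule.mem_pi, EqOn]
  have hTV : ∀ u ∈ V, T u ∈ V := fun u hu => mem_V.2 (T.preservesEqOn_iff.1 hT u (mem_V.1 hu))
  have hsurj : Surjective (T.restrict hTV) := LinearMap.injective_iff_surjective.1
    fun a b hab => Subtype.ext (hST.injective (congrArg Subtype.val hab))
  refine S.preservesEqOn_iff.2 fun u hu => ?_
  obtain ⟨a, ha⟩ := hsurj ⟨u, mem_V.2 hu⟩
  have hTa : T a = u := congrArg Subtype.val ha
  rw [← hTa, hST]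
  exact mem_V.1 a.2

end Linear

theorem Function.LeftInverse.fderiv {𝕜 E F : Type*} [NontriviallyNormedField 𝕜]
    [NormedAddCommGroup E] [NormedSpace 𝕜 E] [NormedAddCommGroup F] [NormedSpace 𝕜 F]
    {f : E → F} {g : F → E} {x : E}
    (h : LeftInverse g f) (hf : DifferentiableAt 𝕜 f x) (hg : DifferentiableAt 𝕜 g (f x)) :
    LeftInverse (fderiv 𝕜 g (f x)) (fderiv 𝕜 f x) := fun u => by
  rw [← ContinuousLinearMap.comp_apply, ← fderiv_comp x hg hf, h.comp_eq_id, fderiv_id,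
    ContinuousLinearMap.id_apply]

theorem preservesEqOn_of_fderiv {ι : Type*} [Fintype ι] {I : Set ι} {f : (ι → ℝ) → (ι → ℝ)}
    (hf : Differentiable ℝ f) (hDf : ∀ x, PreservesEqOn I (fderiv ℝ f x)) :
    PreservesEqOn I f := by
  intro x y hxy i hi
  let γ : ℝ → ι → ℝ := fun t => x + t • (y - x)
  have hyx : EqOn (y - x) 0 I := fun j hj => sub_eq_zero.2 (hxy hj).symm
  have hγ : ∀ t, HasDerivAt (fun t => f (γ t) i) 0 t := fun t => by
    have hcomp := (hf (γ t)).hasFDerivAt.comp_hasDerivAt t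
      (((hasDerivAt_id t).smul_const (y - x)).const_add x)
    have hzero : fderiv ℝ f (γ t) (y - x) i = 0 := by simpa using hDf (γ t) hyx hi
    simpa [hzero] using hasDerivAt_pi.1 hcomp i
  simpa [γ] using is_const_of_deriv_eq_zero (fun t => (hγ t).differentiableAt)
    (fun t => (hγ t).deriv) 0 1

section restrictMap

variable {n : ℕ} (I : Set (Fin n)) [DecidablePred (· ∈ I)]

noncomputable def restrictCLM : (Fin n → ℝ) →L[ℝ] (↥I → ℝ) :=
  ContinuousLinearMap.pi fun i => ContinuousLinearMap.proj (i : Fin n)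

noncomputable def extendByZeroCLM : (↥I → ℝ) →L[ℝ] (Fin n → ℝ) :=
  LinearMap.toContinuousLinearMap
    { toFun := fun z k => if h : k ∈ I then z ⟨k, h⟩ else 0
      map_add' := fun z z' => by ext k; by_cases hk : k ∈ I <;> simp [hk]
      map_smul' := fun c z => by ext k; by_cases hk : k ∈ I <;> simp [hk] }

theorem eqOn_extendByZeroCLM_restrictCLM (x : Fin n → ℝ) :
    EqOn (extendByZeroCLM I (restrictCLM I x)) x I := fun _ hk => dif_pos hk

theorem restrictCLM_extendByZeroCLM (z : ↥I → ℝ) : restrictCLM I (extendByZeroCLM I z) = z :=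
  funext fun i => dif_pos i.2

variable {I}

theorem restrictMap_leftInverse {f g : (Fin n → ℝ) → (Fin n → ℝ)} (hg : PreservesEqOn I g)
    (h : LeftInverse g f) : LeftInverse (restrictMap I g) (restrictMap I f) := fun z => by
  -- `g` only sees the `I`-coordinates, which `extendByZeroCLM I ∘ restrictCLM I` fixes
  have hI : EqOn (g (extendByZeroCLM I (restrictCLM I (f (extendByZeroCLM I z)))))
      (g (f (extendByZeroCLM I z))) I := hg (eqOn_extendByZeroCLM_restrictCLM I _)
  calc restrictMap I g (restrictMap I f z)
      = restrictCLM I (g (f (extendByZeroCLM I z))) := funext fun i => hI i.2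
    _ = z := by rw [h, restrictCLM_extendByZeroCLM]

theorem restrictMap_hasFDerivAt {f : (Fin n → ℝ) → (Fin n → ℝ)} {z : ↥I → ℝ}
    (hf : DifferentiableAt ℝ f (extendByZeroCLM I z)) :
    HasFDerivAt (restrictMap I f)
      (restrictCLM I ∘L fderiv ℝ f (extendByZeroCLM I z) ∘L extendByZeroCLM I) z :=
  (restrictCLM I).hasFDerivAt.comp z (hf.hasFDerivAt.comp z (extendByZeroCLM I).hasFDerivAt)

theorem restrictMap_contDiff {f : (Fin n → ℝ) → (Fin n → ℝ)} {k : WithTop ℕ∞}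
    (hf : ContDiff ℝ k f) :
    ContDiff ℝ k (restrictMap I f) :=
  (restrictCLM I).contDiff.comp (hf.comp (extendByZeroCLM I).contDiff)

end restrictMap

theorem stmt11_general {n : ℕ} (v w : (Fin n → ℝ) → (Fin n → ℝ))
    (hv : ContDiff ℝ 1 v) (hw : ContDiff ℝ 1 w)
    (h1 : Function.LeftInverse w v) (h2 : Function.RightInverse w v)
    (I : Set (Fin n)) [DecidablePred (· ∈ I)]
    (hblock : ∀ x, ∀ i ∈ I, ∀ j ∉ I,
      fderiv ℝ (fun y => v y i) x (Pi.single j 1) = 0) :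
    (∀ x y : Fin n → ℝ, (∀ i ∈ I, x i = y i) → ∀ i ∈ I, v x i = v y i) ∧
    ContDiff ℝ 1 (restrictMap I v) ∧
    Function.Injective (restrictMap I v) ∧
    ∀ z : ↥I → ℝ, ∃ Lz : (↥I → ℝ) ≃L[ℝ] (↥I → ℝ),
      (fderiv ℝ (restrictMap I v) z : (↥I → ℝ) →L[ℝ] (↥I → ℝ)) = Lz := by
  have hvd := hv.differentiable one_ne_zero
  have hwd := hw.differentiable one_ne_zero
  have hDv_inv (x : Fin n → ℝ) : LeftInverse (fderiv ℝ w (v x)) (fderiv ℝ v x) :=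
    h1.fderiv (hvd x) (hwd _)
  have hDw_inv (x : Fin n → ℝ) : LeftInverse (fderiv ℝ v x) (fderiv ℝ w (v x)) := by
    simpa only [h1 x] using h2.leftInverse.fderiv (hwd (v x)) (hvd _)
  have hDv (x : Fin n → ℝ) : PreservesEqOn I (fderiv ℝ v x) :=
    LinearMap.preservesEqOn_of_single (fderiv ℝ v x).toLinearMap fun i hi j hj => by
      simpa [fderiv_apply (hvd x)] using hblock x i hi j hj
  have hDw (y : Fin n → ℝ) : PreservesEqOn I (fderiv ℝ w y) := h2 y ▸
    LinearMap.preservesEqOn_of_leftInverse (S := (fderiv ℝ w (v (w y))).toLinearMap)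
      (hDv_inv (w y)) (hDv (w y))
  refine ⟨fun _ _ hxy => preservesEqOn_of_fderiv hvd hDv hxy, restrictMap_contDiff hv,
    (restrictMap_leftInverse (preservesEqOn_of_fderiv hwd hDw) h1).injective, fun z => ?_⟩
  let x := extendByZeroCLM I z
  refine ⟨.equivOfInverse (restrictCLM I ∘L fderiv ℝ v x ∘L extendByZeroCLM I)
    (restrictCLM I ∘L fderiv ℝ w (v x) ∘L extendByZeroCLM I)
    (restrictMap_leftInverse (hDw _) (hDv_inv x)) (restrictMap_leftInverse (hDv x) (hDw_inv x)),
    (restrictMap_hasFDerivAt (hvd x)).fderiv⟩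

/-- If `v` is a C¹ diffeomorphism of `ℝ^n` whose Jacobian has a vanishing `(I, Iᶜ)` block
everywhere, then the induced map on the `I`-coordinates is well defined (each `v_i`, `i ∈ I`,
depends only on `x_I`) and is a C¹ diffeomorphism onto its image (injective, C¹, with
invertible differential everywhere). -/
theorem stmt11 {n : ℕ} (v w : (Fin n → ℝ) → (Fin n → ℝ))
    (hv : ContDiff ℝ 1 v) (hw : ContDiff ℝ 1 w)
    (h1 : Function.LeftInverse w v) (h2 : Function.RightInverse w v)
    (hJ : ∀ x, ∃ Lx : (Fin n → ℝ) ≃L[ℝ] (Fin n → ℝ),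
      (fderiv ℝ v x : (Fin n → ℝ) →L[ℝ] (Fin n → ℝ)) = Lx)
    (I : Set (Fin n)) [DecidablePred (· ∈ I)]
    (hblock : ∀ x, ∀ i ∈ I, ∀ j ∉ I,
      fderiv ℝ (fun y => v y i) x (Pi.single j 1) = 0) :
    (∀ x y : Fin n → ℝ, (∀ i ∈ I, x i = y i) → ∀ i ∈ I, v x i = v y i) ∧
    ContDiff ℝ 1 (restrictMap I v) ∧
    Function.Injective (restrictMap I v) ∧
    ∀ z : ↥I → ℝ, ∃ Lz : (↥I → ℝ) ≃L[ℝ] (↥I → ℝ),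
      (fderiv ℝ (restrictMap I v) z : (↥I → ℝ) →L[ℝ] (↥I → ℝ)) = Lz :=
  stmt11_general v w hv hw h1 h2 I hblock
end
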